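/- Let G be a graph, let →H be a strongly connected oriented subgraph of G whose (directed) diameter is at most 17 and whose vertex set V(→H) is a 1-step dominating set of G, and suppose the graph G₀ obtained from G by contracting V(→H) to a single vertex is 2-edge connected and has an orientation (edge-disjoint from →H) of diameter at most 4. Then combining these orientations and orienting the remaining edges of G arbitrarily yields a strong orientation of G of diameter at most 21. -/

import Mathlib

/-- There is a directed walk of length at most `n` from `u` to `v` along the relation `D`. -/
def DiPathLE {V : Type*} (D : V → V → Prop) (u v : V) (n : ℕ) : Prop :=
  ∃ m ≤ n, ∃ f : ℕ → V, f 0 = u ∧ f m = v ∧ ∀ i < m, D (f i) (f (i + 1))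

/-- `O` is an orientation of `G`: every arc of `O` is an edge of `G`, and every edge of `G`
gets exactly one of the two possible directions. -/
def IsOrientation {V : Type*} (G : SimpleGraph V) (O : V → V → Prop) : Prop :=
  (∀ u v, O u v → G.Adj u v) ∧ ∀ u v, G.Adj u v → (O u v ↔ ¬ O v u)

/-- `G` is 2-edge connected: connected and without bridges. -/
def TwoEdgeConnected {V : Type*} (G : SimpleGraph V) : Prop :=
  G.Connected ∧ ∀ e, ¬ G.IsBridge e

/-- `G` has diameter exactly `d`. -/
def HasDiam {V : Type*} (G : SimpleGraph V) (d : ℕ) : Prop :=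
  G.Connected ∧ (∀ u v, G.dist u v ≤ d) ∧ ∃ u v, G.dist u v = d

/-- `B` is a `k`-step dominating set of `G`. -/
def KStepDom {V : Type*} (G : SimpleGraph V) (B : Set V) (k : ℕ) : Prop :=
  ∀ v, ∃ u ∈ B, ∃ w : G.Walk v u, w.length ≤ k

/-- `D` is an oriented subgraph of `G` with vertex set `S`: every arc of `D` is an
orientation of an edge of `G` with both endpoints in `S`, and no edge receives
both directions. -/
def IsOrientedSubgraph {V : Type*} (G : SimpleGraph V) (S : Set V) (D : V → V → Prop) : Prop :=
  (∀ u v, D u v → G.Adj u v ∧ u ∈ S ∧ v ∈ S) ∧ ∀ u v, ¬ (D u v ∧ D v u)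

/-- The setoid identifying all the vertices of `B`. -/
def contractSetoid {V : Type*} (B : Set V) : Setoid V where
  r x y := x = y ∨ (x ∈ B ∧ y ∈ B)
  iseqv := by
    refine ⟨fun _ => Or.inl rfl, ?_, ?_⟩
    · rintro x y (rfl | h)
      · exact Or.inl rfl
      · exact Or.inr ⟨h.2, h.1⟩
    · rintro x y z (rfl | h1) (rfl | h2)
      · exact Or.inl rfl
      · exact Or.inr h2
      · exact Or.inr h1
      · exact Or.inr ⟨h1.1, h2.2⟩

/-- The graph `G/B` obtained from `G` by contracting the set `B` to a single vertex
(removing resulting loops). -/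
def contractGraph {V : Type*} (G : SimpleGraph V) (B : Set V) :
    SimpleGraph (Quotient (contractSetoid B)) where
  Adj a b := a ≠ b ∧ ∃ x y, Quotient.mk (contractSetoid B) x = a ∧
    Quotient.mk (contractSetoid B) y = b ∧ G.Adj x y
  symm := by
    constructor
    rintro a b ⟨hne, x, y, hx, hy, hadj⟩
    exact ⟨hne.symm, y, x, hy, hx, hadj.symm⟩
  loopless := by
    constructor
    rintro a ⟨hne, -⟩
    exact hne rfl

/-- `k` is the length of a shortest cycle of `G` containing the edge `pq`. -/
def ShortestCycleThroughEdge {V : Type*} (G : SimpleGraph V) (p q : V) (k : ℕ) : Prop :=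
  (∃ (a : V) (c : G.Walk a a), c.IsCycle ∧ s(p, q) ∈ c.edges ∧ c.length = k) ∧
  ∀ (a : V) (c : G.Walk a a), c.IsCycle → s(p, q) ∈ c.edges → k ≤ c.length

/-- `G` has radius exactly `r`. -/
def HasRadius {V : Type*} (G : SimpleGraph V) (r : ℕ) : Prop :=
  G.Connected ∧ (∃ v, ∀ u, G.dist v u ≤ r) ∧ ∀ v, ∃ u, r ≤ G.dist v u

/-!
A walk of length at most 4 from `[u]` to `[v]` in the contracted graph lifts arc by arc to a
walk of `O`, except that each visit to the contracted vertex may force a jump between two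
vertices of `S`. Only the first arrival in `S` and the last departure from `S` matter: replacing
everything in between by a path of `→H`, of length at most 17, gives a walk of length at most
`4 + 17 = 21`.
-/

namespace DiPathLE

variable {V : Type*} {D E : V → V → Prop} {u v w : V} {m n : ℕ}

lemma refl (D : V → V → Prop) (u : V) : DiPathLE D u u 0 :=
  ⟨0, le_rfl, fun _ => u, rfl, rfl, fun _ hi => absurd hi (Nat.not_lt_zero _)⟩

lemma eq_of_zero (h : DiPathLE D u v 0) : u = v := by
  obtain ⟨k, hk, f, h0, hk', -⟩ := h
  obtain rfl : k = 0 := Nat.le_zero.1 hk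
  exact h0.symm.trans hk'

lemma mono (h : DiPathLE D u v m) (hmn : m ≤ n) : DiPathLE D u v n :=
  let ⟨k, hk, f, hf⟩ := h
  ⟨k, hk.trans hmn, f, hf⟩

lemma map (hDE : ∀ a b, D a b → E a b) (h : DiPathLE D u v n) : DiPathLE E u v n :=
  let ⟨k, hk, f, h0, hk', hf⟩ := h
  ⟨k, hk, f, h0, hk', fun i hi => hDE _ _ (hf i hi)⟩

lemma snoc (h : DiPathLE D u v n) (hvw : D v w) : DiPathLE D u w (n + 1) := by
  obtain ⟨k, hk, f, h0, hfk, hf⟩ := h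
  refine ⟨k + 1, by omega, Function.update f (k + 1) w, ?_, by simp, fun i hi => ?_⟩
  · simpa [Function.update_of_ne (Nat.succ_ne_zero k).symm] using h0
  · rcases Nat.lt_succ_iff_lt_or_eq.1 hi with hi | rfl
    · simpa [Function.update_of_ne (by omega : i ≠ k + 1),
        Function.update_of_ne (by omega : i + 1 ≠ k + 1)] using hf i hi
    · simpa [hfk] using hvw

lemma of_succ (h : DiPathLE D u w (n + 1)) :
    DiPathLE D u w n ∨ ∃ v, DiPathLE D u v n ∧ D v w := by
  obtain ⟨k, hk, f, h0, hfk, hf⟩ := h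
  rcases Nat.le_succ_iff.1 hk with hk | rfl
  · exact Or.inl ⟨k, hk, f, h0, hfk, hf⟩
  · exact Or.inr ⟨f n, ⟨n, le_rfl, f, h0, rfl, fun i hi => hf i (by omega)⟩,
      hfk ▸ hf n n.lt_succ_self⟩

lemma trans (h₁ : DiPathLE D u v m) (h₂ : DiPathLE D v w n) : DiPathLE D u w (m + n) := by
  induction n generalizing w with
  | zero => exact h₂.eq_of_zero ▸ h₁
  | succ n ih =>
    rcases h₂.of_succ with h₂ | ⟨x, h₂, hxw⟩
    · exact (ih h₂).mono (Nat.le_succ _)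
    · exact (ih h₂).snoc hxw

end DiPathLE

section Contraction

variable {V : Type*} {S : Set V} {O : V → V → Prop}

def DiPathLEViaJump (O : V → V → Prop) (S : Set V) (x y : V) (n : ℕ) : Prop :=
  DiPathLE O x y n ∨
    ∃ i j, i + j ≤ n ∧ ∃ s ∈ S, ∃ s' ∈ S, DiPathLE O x s i ∧ DiPathLE O s' y j

namespace DiPathLEViaJump

variable {x y z : V} {m n : ℕ}

lemma mono (h : DiPathLEViaJump O S x y n) (hn : n ≤ m) : DiPathLEViaJump O S x y m := by
  rcases h with h | ⟨i, j, hij, s, hs, s', hs', hi, hj⟩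
  · exact Or.inl (h.mono hn)
  · exact Or.inr ⟨i, j, hij.trans hn, s, hs, s', hs', hi, hj⟩

lemma snoc (h : DiPathLEViaJump O S x y n) (hyz : O y z) : DiPathLEViaJump O S x z (n + 1) := by
  rcases h with h | ⟨i, j, hij, s, hs, s', hs', hi, hj⟩
  · exact Or.inl (h.snoc hyz)
  · exact Or.inr ⟨i, j + 1, by omega, s, hs, s', hs', hi, hj.snoc hyz⟩

lemma jump (h : DiPathLEViaJump O S x y n) (hy : y ∈ S) (hz : z ∈ S) :
    DiPathLEViaJump O S x z n := by
  rcases h with h | ⟨i, j, hij, s, hs, -, -, hi, -⟩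
  · exact Or.inr ⟨n, 0, le_rfl, y, hy, z, hz, h, .refl O z⟩
  · exact Or.inr ⟨i, 0, by omega, s, hs, z, hz, hi, .refl O z⟩

lemma diPathLE {k : ℕ} (hS : ∀ s ∈ S, ∀ s' ∈ S, DiPathLE O s s' k)
    (h : DiPathLEViaJump O S x y n) : DiPathLE O x y (n + k) := by
  rcases h with h | ⟨i, j, hij, s, hs, s', hs', hi, hj⟩
  · exact h.mono (Nat.le_add_right n k)
  · exact ((hi.trans (hS s hs s' hs')).trans hj).mono (by omega)

lemma of_contract {O₀ : Quotient (contractSetoid S) → Quotient (contractSetoid S) → Prop}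
    (hlift : ∀ a b, O₀ a b → ∃ x y, Quotient.mk (contractSetoid S) x = a ∧
      Quotient.mk (contractSetoid S) y = b ∧ O x y)
    (h : DiPathLE O₀ (Quotient.mk (contractSetoid S) x) (Quotient.mk (contractSetoid S) y) n) :
    DiPathLEViaJump O S x y n := by
  induction n generalizing y with
  | zero =>
    rcases Quotient.eq.1 h.eq_of_zero with rfl | ⟨hx, hy⟩
    · exact Or.inl (.refl O x)
    · exact jump (Or.inl (.refl O x)) hx hy
  | succ n ih =>
    rcases h.of_succ with h | ⟨c, hc', hc⟩
    · exact (ih h).mono n.le_succ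
    · obtain ⟨x', y', rfl, hy', hx'y'⟩ := hlift _ _ hc
      rcases Quotient.eq.1 hy' with rfl | ⟨hy', hy⟩
      · exact (ih hc').snoc hx'y'
      · exact ((ih hc').snoc hx'y').jump hy' hy

end DiPathLEViaJump

lemma exists_arc_lift_of_contractGraph {G : SimpleGraph V}
    {O₀ : Quotient (contractSetoid S) → Quotient (contractSetoid S) → Prop}
    (hO₀ : ∀ a b, O₀ a b → (contractGraph G S).Adj a b)
    (hOO₀ : ∀ u v, G.Adj u v → ¬(u ∈ S ∧ v ∈ S) →
      O₀ (Quotient.mk (contractSetoid S) u) (Quotient.mk (contractSetoid S) v) → O u v)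
    {a b : Quotient (contractSetoid S)} (h : O₀ a b) :
    ∃ x y, Quotient.mk (contractSetoid S) x = a ∧
      Quotient.mk (contractSetoid S) y = b ∧ O x y := by
  obtain ⟨hab, x, y, rfl, rfl, hxy⟩ := hO₀ a b h
  exact ⟨x, y, rfl, rfl, hOO₀ x y hxy (fun hS => hab (Quotient.sound (Or.inr hS))) h⟩

end Contraction

theorem combine_orientations_diam21_general {V : Type*}
    (G : SimpleGraph V) (S : Set V) (D : V → V → Prop)
    (hdiam17 : ∀ u ∈ S, ∀ v ∈ S, DiPathLE D u v 17)
    (O₀ : Quotient (contractSetoid S) → Quotient (contractSetoid S) → Prop)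
    (hO₀ : IsOrientation (contractGraph G S) O₀)
    (hO₀diam : ∀ a b, DiPathLE O₀ a b 4)
    (O : V → V → Prop)
    (hOD : ∀ u v, D u v → O u v)
    (hOO₀ : ∀ u v, G.Adj u v → ¬(u ∈ S ∧ v ∈ S) →
      (O u v ↔ O₀ (Quotient.mk (contractSetoid S) u) (Quotient.mk (contractSetoid S) v))) :
    ∀ u v : V, DiPathLE O u v 21 := by
  intro u v
  have hlift a b (h : O₀ a b) := exists_arc_lift_of_contractGraph hO₀.1
    (fun x y hxy hxyS => (hOO₀ x y hxy hxyS).2) h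
  exact (DiPathLEViaJump.of_contract hlift (hO₀diam _ _)).diPathLE
    fun s hs s' hs' => (hdiam17 s hs s' hs').map hOD

/-- If `→H` (with vertex set `S`, arcs `D`) is a strongly connected
oriented subgraph of `G` of directed diameter at most 17 whose vertex set is a
1-step dominating set, the contraction `G/S` is 2-edge connected and `O₀` is an
orientation of `G/S` of diameter at most 4, then any orientation `O` of `G`
extending `D`, agreeing with `O₀` on all edges not inside `S`, and orienting the
remaining edges arbitrarily, is a strong orientation of `G` of diameter at most 21. -/
theorem combine_orientations_diam21 {V : Type*} [Fintype V]
    (G : SimpleGraph V) (S : Set V) (D : V → V → Prop)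
    (hsub : IsOrientedSubgraph G S D)
    (hdiam17 : ∀ u ∈ S, ∀ v ∈ S, DiPathLE D u v 17)
    (hdom : KStepDom G S 1)
    (h2ec : TwoEdgeConnected (contractGraph G S))
    (O₀ : Quotient (contractSetoid S) → Quotient (contractSetoid S) → Prop)
    (hO₀ : IsOrientation (contractGraph G S) O₀)
    (hO₀diam : ∀ a b, DiPathLE O₀ a b 4)
    (O : V → V → Prop)
    (hO : IsOrientation G O)
    (hOD : ∀ u v, D u v → O u v)
    (hOO₀ : ∀ u v, G.Adj u v → ¬(u ∈ S ∧ v ∈ S) →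
      (O u v ↔ O₀ (Quotient.mk (contractSetoid S) u) (Quotient.mk (contractSetoid S) v))) :
    ∀ u v : V, DiPathLE O u v 21 :=
  combine_orientations_diam21_general G S D hdiam17 O₀ hO₀ hO₀diam O hOD hOO₀
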